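/- Let ABCD be a rectangle with |AB| = a, |BC| = b, and suppose a parallelogram EFGH is inscribed in it as a billiard trajectory with E ∈ AB at distance e = |AE| from A. If F₁ is a focus of an ellipse inscribed in the rectangle through which EFGH is a billiard trajectory, with distances x from AD and y from AB, then (a − 2x)² − (b − 2y)² = a² − b² and (a − 2x)(b − 2y) = b(a − 2e). -/

import Mathlib

open EuclideanGeometry
open scoped RealInnerProductSpace

noncomputable section

abbrev Pt := EuclideanSpace ℝ (Fin 2)

/-- `A B C D` (in this cyclic order) are the vertices of a nondegenerate rectangle. -/
def IsRectangle (A B C D : Pt) : Prop :=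
  A ≠ B ∧ A ≠ D ∧ C = B + D - A ∧ ⟪B - A, D - A⟫ = 0

/-- Billiard reflection off a side with direction `u` at the vertex `X`, with previous
vertex `Pv` and next vertex `Nx`. -/
def ReflectsOffSide (Pv X Nx u : Pt) : Prop :=
  InnerProductGeometry.angle (Pv - X) u = InnerProductGeometry.angle (Nx - X) (-u)

private lemma aux_sqle (X Y : ℝ) (hX : 0 ≤ X) (hY : 0 ≤ Y) (h : X^2 ≤ Y^2) : X ≤ Y := by
  nlinarith

set_option maxHeartbeats 4000000 in
/-- If the parallelogram `EFGH` is inscribed in the rectangle `ABCD` (`|AB| = a`,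
`|BC| = b`) as a billiard trajectory, and is simultaneously a billiard trajectory within
an ellipse whose foci `F₁`, `F₂` are symmetric about the center of the rectangle, then,
with `e = |AE|` and `x`, `y` the distances from `F₁` to the lines `AD`, `AB`:
`(a−2x)² − (b−2y)² = a² − b²` and `(a−2x)(b−2y) = b(a−2e)`. -/
theorem parallelogram_focus_equations
    (A B C D E F G H F₁ F₂ : Pt) (d : ℝ)
    (a b e x y : ℝ)
    (hrect : IsRectangle A B C D)
    (ha : a = dist A B) (hb : b = dist B C) (he : e = dist A E)
    (hpar : F - E = G - H)
    (hE : E ∈ openSegment ℝ A B) (hF : F ∈ openSegment ℝ B C)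
    (hG : G ∈ openSegment ℝ C D) (hH : H ∈ openSegment ℝ D A)
    (hreflE : ReflectsOffSide H E F (B - A))
    (hreflF : ReflectsOffSide E F G (C - B))
    (hreflG : ReflectsOffSide F G H (D - C))
    (hreflH : ReflectsOffSide G H E (A - D))
    (hF₂ : F₂ = A + C - F₁)
    (hd : dist F₁ F₂ < d)
    (honE : dist E F₁ + dist E F₂ = d) (honF : dist F F₁ + dist F F₂ = d)
    (honG : dist G F₁ + dist G F₂ = d) (honH : dist H F₁ + dist H F₂ = d)
    -- billiard reflection law off the ellipse, via the focal reflection property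
    (hellE : ∠ H E F₁ = ∠ F E F₂) (hellF : ∠ E F F₁ = ∠ G F F₂)
    (hellG : ∠ F G F₁ = ∠ H G F₂) (hellH : ∠ G H F₁ = ∠ E H F₂)
    (hx : x = Metric.infDist F₁ (affineSpan ℝ ({A, D} : Set Pt) : Set Pt))
    (hy : y = Metric.infDist F₁ (affineSpan ℝ ({A, B} : Set Pt) : Set Pt)) :
    (a - 2 * x) ^ 2 - (b - 2 * y) ^ 2 = a ^ 2 - b ^ 2 ∧
    (a - 2 * x) * (b - 2 * y) = b * (a - 2 * e) := by
  obtain ⟨hAB, hAD, hC, hperp⟩ := hrect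
  set u : Pt := B - A with hudef
  set v : Pt := D - A with hvdef
  have hun : u ≠ 0 := sub_ne_zero.mpr (Ne.symm hAB)
  have hvn : v ≠ 0 := sub_ne_zero.mpr (Ne.symm hAD)
  have huv : ⟪u, v⟫ = 0 := hperp
  have hvu : ⟪v, u⟫ = 0 := by rw [real_inner_comm]; exact hperp
  have hBA : B = A + u := by rw [hudef]; abel
  have hDA : D = A + v := by rw [hvdef]; abel
  have hCA : C = A + u + v := by rw [hC, hudef, hvdef]; abel
  have haU : a = ‖u‖ := by
    have h1 : A - B = -u := by rw [hudef]; abel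
    rw [ha, dist_eq_norm, h1, norm_neg]
  have hbV : b = ‖v‖ := by
    have h1 : B - C = -v := by rw [hCA, hBA]; abel
    rw [hb, dist_eq_norm, h1, norm_neg]
  have ha0 : 0 < a := by rw [haU]; exact norm_pos_iff.mpr hun
  have hb0 : 0 < b := by rw [hbV]; exact norm_pos_iff.mpr hvn
  have hip : ∀ p q r w : ℝ, ⟪p•u + q•v, r•u + w•v⟫ = p*r*a^2 + q*w*b^2 := by
    intro p q r w
    simp only [inner_add_left, inner_add_right, real_inner_smul_left, real_inner_smul_right,
      huv, hvu, real_inner_self_eq_norm_sq, mul_zero]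
    rw [← haU, ← hbV]; ring
  have hipu : ∀ p q : ℝ, ⟪p•u + q•v, u⟫ = p*a^2 := by
    intro p q
    have h := hip p q 1 0
    rw [one_smul, zero_smul, add_zero] at h
    rw [h]; ring
  have hipv : ∀ p q : ℝ, ⟪p•u + q•v, v⟫ = q*b^2 := by
    intro p q
    have h := hip p q 0 1
    rw [one_smul, zero_smul, zero_add] at h
    rw [h]; ring
  have hnorm : ∀ p q : ℝ, ‖p•u + q•v‖^2 = p^2*a^2 + q^2*b^2 := by
    intro p q
    rw [← real_inner_self_eq_norm_sq, hip]; ring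
  -- decomposition of F₁
  have hdecomp : ∃ p q : ℝ, F₁ = A + p • u + q • v := by
    have hnu : ‖u‖ ≠ 0 := norm_ne_zero_iff.mpr hun
    have hnv : ‖v‖ ≠ 0 := norm_ne_zero_iff.mpr hvn
    have hd1 : ⟪(‖u‖:ℝ)⁻¹ • u, (‖u‖:ℝ)⁻¹ • u⟫ = (1:ℝ) := by
      rw [real_inner_smul_left, real_inner_smul_right, real_inner_self_eq_norm_sq]
      field_simp
    have hd2 : ⟪(‖v‖:ℝ)⁻¹ • v, (‖v‖:ℝ)⁻¹ • v⟫ = (1:ℝ) := by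
      rw [real_inner_smul_left, real_inner_smul_right, real_inner_self_eq_norm_sq]
      field_simp
    have ho1 : ⟪(‖u‖:ℝ)⁻¹ • u, (‖v‖:ℝ)⁻¹ • v⟫ = (0:ℝ) := by
      rw [real_inner_smul_left, real_inner_smul_right, huv]; ring
    have ho2 : ⟪(‖v‖:ℝ)⁻¹ • v, (‖u‖:ℝ)⁻¹ • u⟫ = (0:ℝ) := by
      rw [real_inner_smul_left, real_inner_smul_right, hvu]; ring
    have hON : Orthonormal ℝ ![(‖u‖:ℝ)⁻¹ • u, (‖v‖:ℝ)⁻¹ • v] := by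
      rw [orthonormal_iff_ite]
      intro i j
      fin_cases i <;> fin_cases j <;> simp [hd1, hd2, ho1, ho2, norm_smul, norm_inv, norm_norm, inv_mul_cancel₀ hnu, inv_mul_cancel₀ hnv]
    have hsp : Submodule.span ℝ (Set.range ![(‖u‖:ℝ)⁻¹ • u, (‖v‖:ℝ)⁻¹ • v]) = ⊤ :=
      Submodule.eq_top_of_finrank_eq (by
        rw [finrank_span_eq_card hON.linearIndependent]
        simp [finrank_euclideanSpace_fin])
    have hmem : F₁ - A ∈ Submodule.span ℝ ({(‖u‖:ℝ)⁻¹ • u, (‖v‖:ℝ)⁻¹ • v} : Set Pt) := by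
      have hr : Set.range ![(‖u‖:ℝ)⁻¹ • u, (‖v‖:ℝ)⁻¹ • v]
          = ({(‖u‖:ℝ)⁻¹ • u, (‖v‖:ℝ)⁻¹ • v} : Set Pt) := by
        ext z; simp [Matrix.range_cons, Matrix.range_empty]; tauto
      rw [← hr, hsp]; trivial
    obtain ⟨c, d', hcd⟩ := Submodule.mem_span_pair.mp hmem
    refine ⟨c * (‖u‖:ℝ)⁻¹, d' * (‖v‖:ℝ)⁻¹, ?_⟩
    have h2 : F₁ = A + (c • ((‖u‖:ℝ)⁻¹ • u) + d' • ((‖v‖:ℝ)⁻¹ • v)) := by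
      rw [hcd]; abel
    rw [h2, smul_smul, smul_smul]; abel
  obtain ⟨α, β, hF1⟩ := hdecomp
  have hF2 : F₂ = A + (1-α) • u + (1-β) • v := by
    rw [hF₂, hCA, hF1]; module
  -- segment parameters
  rw [openSegment_eq_image] at hE hF hG hH
  obtain ⟨s, hsI, hEs⟩ := hE
  obtain ⟨t, htI, hFs⟩ := hF
  obtain ⟨g, hgI, hGs⟩ := hG
  obtain ⟨h₀, hhI, hHs⟩ := hH
  obtain ⟨hs0, hs1⟩ := hsI
  obtain ⟨ht0, ht1⟩ := htI
  have hEe : E = A + s • u := by rw [← hEs, hBA]; module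
  have hFe : F = A + u + t • v := by rw [← hFs, hBA, hCA]; module
  have hGe0 : G = A + (1-g) • u + v := by rw [← hGs, hCA, hDA]; module
  have hHe0 : H = A + (1-h₀) • v := by rw [← hHs, hDA]; module
  -- parallelogram conditions
  have hpar' : (1-s)•u + t•v = (1-g)•u + h₀•v := by
    have h1 : F - E = (1-s)•u + t•v := by rw [hFe, hEe]; module
    have h2 : G - H = (1-g)•u + h₀•v := by rw [hGe0, hHe0]; module
    rw [h1, h2] at hpar; exact hpar
  have hg : g = s := by
    have e1 : ⟪(1-s)•u + t•v, u⟫ = ⟪(1-g)•u + h₀•v, u⟫ := by rw [hpar']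
    rw [hipu, hipu] at e1
    have h2 : (g - s)*a^2 = 0 := by linear_combination e1
    have h3 := (mul_eq_zero.mp h2).resolve_right (pow_ne_zero 2 ha0.ne')
    linarith
  have hh : h₀ = t := by
    have e1 : ⟪(1-s)•u + t•v, v⟫ = ⟪(1-g)•u + h₀•v, v⟫ := by rw [hpar']
    rw [hipv, hipv] at e1
    have h2 : (t - h₀)*b^2 = 0 := by linear_combination e1
    have h3 := (mul_eq_zero.mp h2).resolve_right (pow_ne_zero 2 hb0.ne')
    linarith
  have hGe : G = A + (1-s) • u + v := by rw [hGe0, hg]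
  have hHe : H = A + (1-t) • v := by rw [hHe0, hh]
  -- cosine cross-multiplication helper
  have inner_eq : ∀ w z : Pt, ⟪w, z⟫ = Real.cos (InnerProductGeometry.angle w z) * (‖w‖ * ‖z‖) := by
    intro w z
    rw [InnerProductGeometry.cos_angle]
    rcases eq_or_ne (‖w‖ * ‖z‖) 0 with h | h
    · rcases mul_eq_zero.mp h with h' | h'
      · simp [norm_eq_zero.mp h']
      · simp [norm_eq_zero.mp h']
    · rw [div_mul_cancel₀ _ h]
  have cross : ∀ w₁ z₁ w₂ z₂ : Pt,
      InnerProductGeometry.angle w₁ z₁ = InnerProductGeometry.angle w₂ z₂ →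
      ⟪w₁, z₁⟫ * (‖w₂‖ * ‖z₂‖) = ⟪w₂, z₂⟫ * (‖w₁‖ * ‖z₁‖) := by
    intro w₁ z₁ w₂ z₂ hang
    rw [inner_eq w₁ z₁, inner_eq w₂ z₂, hang]; ring
  -- rectangle reflection laws at E and F give t = 1 - s
  simp only [ReflectsOffSide] at hreflE hreflF
  have hCB : C - B = v := by rw [hCA, hBA]; abel
  rw [hCB] at hreflF
  have hHEc : H - E = (-s)•u + (1-t)•v := by rw [hHe, hEe]; module
  have hFEc : F - E = (1-s)•u + t•v := by rw [hFe, hEe]; module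
  have hGFc : G - F = (-s)•u + (1-t)•v := by rw [hGe, hFe]; module
  have hEFc : E - F = (s-1)•u + (-t)•v := by rw [hEe, hFe]; module
  have hn₁0 : (0:ℝ) < ‖(-s)•u + (1-t)•v‖ := by
    rw [norm_pos_iff]
    intro h0
    have h1 := hipu (-s) (1-t)
    rw [h0, inner_zero_left] at h1
    linarith [mul_pos hs0 (pow_pos ha0 2)]
  have hn₂0 : (0:ℝ) < ‖(1-s)•u + t•v‖ := by
    rw [norm_pos_iff]
    intro h0
    have h1 := hipu (1-s) t
    rw [h0, inner_zero_left] at h1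
    linarith [mul_pos (by linarith : (0:ℝ) < 1-s) (pow_pos ha0 2)]
  have rE := cross _ _ _ _ hreflE
  rw [hHEc, hFEc] at rE
  rw [inner_neg_right, hipu, hipu, norm_neg, ← haU] at rE
  have e₁ : s * ‖(1-s)•u + t•v‖ = (1-s) * ‖(-s)•u + (1-t)•v‖ := by
    have h3 : (a:ℝ)^3 ≠ 0 := pow_ne_zero 3 ha0.ne'
    apply mul_left_cancel₀ h3
    linear_combination (-1 : ℝ) * rE
  have rF := cross _ _ _ _ hreflF
  rw [hEFc, hGFc] at rF
  rw [inner_neg_right, hipv, hipv, norm_neg, ← hbV] at rF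
  have hnEF : ‖(s-1)•u + (-t)•v‖ = ‖(1-s)•u + t•v‖ := by
    have h1 : (s-1)•u + (-t)•v = -((1-s)•u + t•v) := by module
    rw [h1, norm_neg]
  rw [hnEF] at rF
  have e₂ : t * ‖(-s)•u + (1-t)•v‖ = (1-t) * ‖(1-s)•u + t•v‖ := by
    have h3 : (b:ℝ)^3 ≠ 0 := pow_ne_zero 3 hb0.ne'
    apply mul_left_cancel₀ h3
    linear_combination (-1 : ℝ) * rF
  have hst : (s*t) * (‖(-s)•u + (1-t)•v‖ * ‖(1-s)•u + t•v‖)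
      = ((1-s)*(1-t)) * (‖(-s)•u + (1-t)•v‖ * ‖(1-s)•u + t•v‖) := by
    linear_combination (t * ‖(-s)•u + (1-t)•v‖) * e₁ + ((1-s) * ‖(-s)•u + (1-t)•v‖) * e₂
  have hst2 : s*t = (1-s)*(1-t) :=
    mul_right_cancel₀ (ne_of_gt (mul_pos hn₁0 hn₂0)) hst
  have hts : t = 1 - s := by linear_combination hst2
  subst hts
  -- distances to the foci
  set r₁ := dist E F₁ with hr₁def
  set r₂ := dist E F₂ with hr₂def
  set r₃ := dist F F₁ with hr₃def
  set r₄ := dist F F₂ with hr₄def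
  have hd0 : 0 < d := lt_of_le_of_lt dist_nonneg hd
  have hnr₁ : ‖F₁ - E‖ = r₁ := by rw [hr₁def, dist_eq_norm, norm_sub_rev]
  have hnr₂ : ‖F₂ - E‖ = r₂ := by rw [hr₂def, dist_eq_norm, norm_sub_rev]
  have hnr₃ : ‖F₁ - F‖ = r₃ := by rw [hr₃def, dist_eq_norm, norm_sub_rev]
  have hnr₄ : ‖F₂ - F‖ = r₄ := by rw [hr₄def, dist_eq_norm, norm_sub_rev]
  have hr₁0 : 0 < r₁ := by
    rcases (hr₁def ▸ dist_nonneg : (0:ℝ) ≤ r₁).lt_or_eq with h | h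
    · exact h
    · exfalso
      have hEF₁ : E = F₁ := dist_eq_zero.mp (by rw [← hr₁def, ← h])
      have h2 : dist F₁ F₂ = r₂ := by rw [hr₂def, hEF₁]
      linarith [hd, honE, h.symm ▸ honE]
  have hr₂0 : 0 < r₂ := by
    rcases (hr₂def ▸ dist_nonneg : (0:ℝ) ≤ r₂).lt_or_eq with h | h
    · exact h
    · exfalso
      have hEF₂ : E = F₂ := dist_eq_zero.mp (by rw [← hr₂def, ← h])
      have h2 : dist F₁ F₂ = r₁ := by rw [hr₁def, hEF₂, dist_comm]
      linarith [hd, honE]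
  have hr₃0 : 0 < r₃ := by
    rcases (hr₃def ▸ dist_nonneg : (0:ℝ) ≤ r₃).lt_or_eq with h | h
    · exact h
    · exfalso
      have hFF₁ : F = F₁ := dist_eq_zero.mp (by rw [← hr₃def, ← h])
      have h2 : dist F₁ F₂ = r₄ := by rw [hr₄def, hFF₁]
      linarith [hd, honF]
  have hr₄0 : 0 < r₄ := by
    rcases (hr₄def ▸ dist_nonneg : (0:ℝ) ≤ r₄).lt_or_eq with h | h
    · exact h
    · exfalso
      have hFF₂ : F = F₂ := dist_eq_zero.mp (by rw [← hr₄def, ← h])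
      have h2 : dist F₁ F₂ = r₃ := by rw [hr₃def, hFF₂, dist_comm]
      linarith [hd, honF]
  have hsq₁ : r₁^2 = (α-s)^2*a^2 + β^2*b^2 := by
    rw [hr₁def, dist_eq_norm]
    have h1 : E - F₁ = (s-α)•u + (-β)•v := by rw [hEe, hF1]; module
    rw [h1, hnorm]; ring
  have hsq₂ : r₂^2 = (1-α-s)^2*a^2 + (1-β)^2*b^2 := by
    rw [hr₂def, dist_eq_norm]
    have h1 : E - F₂ = (s-1+α)•u + (β-1)•v := by rw [hEe, hF2]; module
    rw [h1, hnorm]; ring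
  have hsq₃ : r₃^2 = (1-α)^2*a^2 + (1-s-β)^2*b^2 := by
    rw [hr₃def, dist_eq_norm]
    have h1 : F - F₁ = (1-α)•u + ((1-s)-β)•v := by rw [hFe, hF1]; module
    rw [h1, hnorm]
  have hsq₄ : r₄^2 = α^2*a^2 + (β-s)^2*b^2 := by
    rw [hr₄def, dist_eq_norm]
    have h1 : F - F₂ = α•u + (β-s)•v := by rw [hFe, hF2]; module
    rw [h1, hnorm]
  have h2d₁ : 2*d*r₁ = d^2 + ((2*β-1)*b^2 - (2*α-1)*(2*s-1)*a^2) := by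
    linear_combination (d - r₁ + r₂) * honE + hsq₁ - hsq₂
  have h2d₂ : 2*d*r₂ = d^2 - ((2*β-1)*b^2 - (2*α-1)*(2*s-1)*a^2) := by
    linear_combination (d + r₁ - r₂) * honE - hsq₁ + hsq₂
  have h2d₃ : 2*d*r₃ = d^2 + ((2*s-1)*(2*β-1)*b^2 - (2*α-1)*a^2) := by
    linear_combination (d - r₃ + r₄) * honF + hsq₃ - hsq₄
  have h2d₄ : 2*d*r₄ = d^2 - ((2*s-1)*(2*β-1)*b^2 - (2*α-1)*a^2) := by
    linear_combination (d + r₃ - r₄) * honF - hsq₃ + hsq₄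
  -- side vectors and norms
  set L := ‖u + v‖ with hLdef
  have hL0 : 0 < L := by
    rw [hLdef, norm_pos_iff]
    intro h0
    have h1 := hipu 1 1
    rw [one_smul, one_smul] at h1
    rw [h0, inner_zero_left] at h1
    linarith [pow_pos ha0 2]
  have hLm : ‖v - u‖ = L := by
    have h1 : ‖v - u‖^2 = ‖u + v‖^2 := by
      have e1 : v - u = (-1:ℝ)•u + (1:ℝ)•v := by module
      have e2 : u + v = (1:ℝ)•u + (1:ℝ)•v := by module
      rw [e1, e2, hnorm, hnorm]; ring
    rw [hLdef, ← Real.sqrt_sq (norm_nonneg (v-u)), ← Real.sqrt_sq (norm_nonneg (u+v)), h1]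
  have hnHE : ‖(-s)•u + s•v‖ = s*L := by
    have h1 : (-s)•u + s•v = s•(v-u) := by module
    rw [h1, norm_smul, Real.norm_eq_abs, abs_of_pos hs0, hLm]
  have hnFE : ‖(1-s)•u + (1-s)•v‖ = (1-s)*L := by
    have h1 : (1-s)•u + (1-s)•v = (1-s)•(u+v) := by module
    rw [h1, norm_smul, Real.norm_eq_abs, abs_of_pos (by linarith : (0:ℝ) < 1-s), hLdef]
  have hnFG : ‖s•u + (-s)•v‖ = s*L := by
    have h1 : s•u + (-s)•v = -(s•(v-u)) := by module
    rw [h1, norm_neg, norm_smul, Real.norm_eq_abs, abs_of_pos hs0, hLm]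
  have hnHG : ‖(s-1)•u + (s-1)•v‖ = (1-s)*L := by
    have h1 : (s-1)•u + (s-1)•v = -((1-s)•(u+v)) := by module
    rw [h1, norm_neg, norm_smul, Real.norm_eq_abs, abs_of_pos (by linarith : (0:ℝ) < 1-s), hLdef]
  have hsL0 : s*(1-s)*L ≠ 0 :=
    ne_of_gt (mul_pos (mul_pos hs0 (by linarith)) hL0)
  -- canonical forms after t = 1 - s
  have hHEc' : H - E = (-s)•u + s•v := by rw [hHe, hEe]; module
  have hFEc' : F - E = (1-s)•u + (1-s)•v := by rw [hFe, hEe]; module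
  have hFGc : F - G = s•u + (-s)•v := by rw [hFe, hGe]; module
  have hHGc : H - G = (s-1)•u + (s-1)•v := by rw [hHe, hGe]; module
  have hEFc' : E - F = (s-1)•u + (s-1)•v := by rw [hEe, hFe]; module
  have hGFc' : G - F = (-s)•u + s•v := by rw [hGe, hFe]; module
  have hGHc : G - H = (1-s)•u + (1-s)•v := by rw [hGe, hHe]; module
  have hEHc : E - H = s•u + (-s)•v := by rw [hEe, hHe]; module
  have hF1E : F₁ - E = (α-s)•u + β•v := by rw [hF1, hEe]; module
  have hF2E : F₂ - E = (1-α-s)•u + (1-β)•v := by rw [hF2, hEe]; module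
  have hF1F : F₁ - F = (α-1)•u + (β-1+s)•v := by rw [hF1, hFe]; module
  have hF2F : F₂ - F = (-α)•u + (s-β)•v := by rw [hF2, hFe]; module
  have hF1G : F₁ - G = (α-1+s)•u + (β-1)•v := by rw [hF1, hGe]; module
  have hF2G : F₂ - G = (s-α)•u + (-β)•v := by rw [hF2, hGe]; module
  have hF1H : F₁ - H = α•u + (β-s)•v := by rw [hF1, hHe]; module
  have hF2H : F₂ - H = (1-α)•u + (1-β-s)•v := by rw [hF2, hHe]; module
  have hnrG1 : ‖F₁ - G‖ = r₂ := by
    have h1 : F₁ - G = -(F₂ - E) := by rw [hF1, hGe, hF2, hEe]; module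
    rw [h1, norm_neg, hnr₂]
  have hnrG2 : ‖F₂ - G‖ = r₁ := by
    have h1 : F₂ - G = -(F₁ - E) := by rw [hF2, hGe, hF1, hEe]; module
    rw [h1, norm_neg, hnr₁]
  have hnrH1 : ‖F₁ - H‖ = r₄ := by
    have h1 : F₁ - H = -(F₂ - F) := by rw [hF1, hHe, hF2, hFe]; module
    rw [h1, norm_neg, hnr₄]
  have hnrH2 : ‖F₂ - H‖ = r₃ := by
    have h1 : F₂ - H = -(F₁ - F) := by rw [hF2, hHe, hF1, hFe]; module
    rw [h1, norm_neg, hnr₃]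
  -- the four ellipse reflection equations
  simp only [EuclideanGeometry.angle, vsub_eq_sub] at hellE hellF hellG hellH
  have rEll₁ := cross _ _ _ _ hellE
  rw [hnr₁, hnr₂, hHEc', hFEc', hF1E, hF2E, hnHE, hnFE, hip, hip] at rEll₁
  have EqE : (-(α-s)*a^2 + β*b^2) * r₂ = ((1-α-s)*a^2 + (1-β)*b^2) * r₁ := by
    apply mul_left_cancel₀ hsL0
    linear_combination rEll₁
  have rEll₂ := cross _ _ _ _ hellG
  rw [hnrG1, hnrG2, hFGc, hHGc, hF1G, hF2G, hnFG, hnHG, hip, hip] at rEll₂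
  have EqG : ((α-1+s)*a^2 - (β-1)*b^2) * r₁ = (-(s-α)*a^2 + β*b^2) * r₂ := by
    apply mul_left_cancel₀ hsL0
    linear_combination rEll₂
  have rEll₃ := cross _ _ _ _ hellF
  rw [hnr₃, hnr₄, hEFc', hGFc', hF1F, hF2F, hnHG, hnHE, hip, hip] at rEll₃
  have EqF : (-(α-1)*a^2 - (β-1+s)*b^2) * r₄ = (α*a^2 + (s-β)*b^2) * r₃ := by
    apply mul_left_cancel₀ hsL0
    linear_combination rEll₃
  have rEll₄ := cross _ _ _ _ hellH
  rw [hnrH1, hnrH2, hGHc, hEHc, hF1H, hF2H, hnFE, hnFG, hip, hip] at rEll₄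
  have EqH : (α*a^2 + (β-s)*b^2) * r₃ = ((1-α)*a^2 - (1-β-s)*b^2) * r₄ := by
    apply mul_left_cancel₀ hsL0
    linear_combination rEll₄
  -- rational-form equations
  have hE'' : (-(α-s)*a^2 + β*b^2) * (d^2 - ((2*β-1)*b^2 - (2*α-1)*(2*s-1)*a^2))
      = ((1-α-s)*a^2 + (1-β)*b^2) * (d^2 + ((2*β-1)*b^2 - (2*α-1)*(2*s-1)*a^2)) := by
    linear_combination (2*d) * EqE - (-(α-s)*a^2 + β*b^2) * h2d₂
      + ((1-α-s)*a^2 + (1-β)*b^2) * h2d₁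
  have hG'' : ((α-1+s)*a^2 - (β-1)*b^2) * (d^2 + ((2*β-1)*b^2 - (2*α-1)*(2*s-1)*a^2))
      = (-(s-α)*a^2 + β*b^2) * (d^2 - ((2*β-1)*b^2 - (2*α-1)*(2*s-1)*a^2)) := by
    linear_combination (2*d) * EqG - ((α-1+s)*a^2 - (β-1)*b^2) * h2d₁
      + (-(s-α)*a^2 + β*b^2) * h2d₂
  have hF'' : (-(α-1)*a^2 - (β-1+s)*b^2) * (d^2 - ((2*s-1)*(2*β-1)*b^2 - (2*α-1)*a^2))
      = (α*a^2 + (s-β)*b^2) * (d^2 + ((2*s-1)*(2*β-1)*b^2 - (2*α-1)*a^2)) := by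
    linear_combination (2*d) * EqF - (-(α-1)*a^2 - (β-1+s)*b^2) * h2d₄
      + (α*a^2 + (s-β)*b^2) * h2d₃
  have hH'' : (α*a^2 + (β-s)*b^2) * (d^2 + ((2*s-1)*(2*β-1)*b^2 - (2*α-1)*a^2))
      = ((1-α)*a^2 - (1-β-s)*b^2) * (d^2 - ((2*s-1)*(2*β-1)*b^2 - (2*α-1)*a^2)) := by
    linear_combination (2*d) * EqH - (α*a^2 + (β-s)*b^2) * h2d₃
      + ((1-α)*a^2 - (1-β-s)*b^2) * h2d₄
  have hd2 : (d:ℝ)^2 ≠ 0 := pow_ne_zero 2 hd0.ne'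
  -- key scalar consequences
  have P1 : d^2*(2*s-1) = -((2*α-1)*((2*β-1)*b^2 - (2*α-1)*(2*s-1)*a^2)) := by
    have key : a^2*(d^2*(2*s-1) + (2*α-1)*((2*β-1)*b^2 - (2*α-1)*(2*s-1)*a^2)) = 0 := by
      linear_combination (1/2 : ℝ) * hE'' + (1/2 : ℝ) * hG''
    have h2 := (mul_eq_zero.mp key).resolve_left (pow_ne_zero 2 ha0.ne')
    linarith
  have P2 : d^2*(2*β-1) = (2*β-1)*b^2 - (2*α-1)*(2*s-1)*a^2 := by
    have key : b^2*(d^2*(2*β-1) - ((2*β-1)*b^2 - (2*α-1)*(2*s-1)*a^2)) = 0 := by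
      linear_combination (1/2 : ℝ) * hE'' - (1/2 : ℝ) * hG''
    have h2 := (mul_eq_zero.mp key).resolve_left (pow_ne_zero 2 hb0.ne')
    linarith
  have P4 : d^2*(2*α-1) = -((2*s-1)*(2*β-1)*b^2 - (2*α-1)*a^2) := by
    have key : a^2*(d^2*(2*α-1) + ((2*s-1)*(2*β-1)*b^2 - (2*α-1)*a^2)) = 0 := by
      linear_combination (1/2 : ℝ) * hH'' - (1/2 : ℝ) * hF''
    have h2 := (mul_eq_zero.mp key).resolve_left (pow_ne_zero 2 ha0.ne')
    linarith
  have G1 : (2*α-1)*(2*β-1) = 1 - 2*s := by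
    have key : d^2*((2*α-1)*(2*β-1) - (1-2*s)) = 0 := by
      linear_combination (2*α-1) * P2 + P1
    have h2 := (mul_eq_zero.mp key).resolve_left hd2
    linarith
  have C1 : (d^2 + ((2*β-1)*b^2 - (2*α-1)*(2*s-1)*a^2))^2
      = 4*d^2*((α-s)^2*a^2 + β^2*b^2) := by
    linear_combination (-(2*d*r₁ + d^2 + ((2*β-1)*b^2 - (2*α-1)*(2*s-1)*a^2))) * h2d₁
      + 4*d^2*hsq₁
  have C2 : (d^2 + ((2*s-1)*(2*β-1)*b^2 - (2*α-1)*a^2))^2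
      = 4*d^2*((1-α)^2*a^2 + (1-s-β)^2*b^2) := by
    linear_combination (-(2*d*r₃ + d^2 + ((2*s-1)*(2*β-1)*b^2 - (2*α-1)*a^2))) * h2d₃
      + 4*d^2*hsq₃
  -- the main quadratic relation
  have GA : (2*α-1)^2*a^2 - (2*β-1)^2*b^2 = a^2 - b^2 := by
    by_cases hY0 : (2*β-1 : ℝ) = 0
    · have hβ : β = 1/2 := by linarith
      have hs2 : s = 1/2 := by
        have h := G1; rw [hY0, mul_zero] at h; linarith
      subst hβ; subst hs2
      by_cases hX0 : (2*α-1 : ℝ) = 0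
      · have hα : α = 1/2 := by linarith
        subst hα
        have hdb : d^2 = b^2 := by
          apply mul_left_cancel₀ hd2
          linear_combination C1
        have hda : d^2 = a^2 := by
          apply mul_left_cancel₀ hd2
          linear_combination C2
        linear_combination hda - hdb
      · have hda : d^2 = a^2 := by
          have h9 : (d^2 - a^2) * (2*α-1) = 0 := by linear_combination P4
          exact sub_eq_zero.mp ((mul_eq_zero.mp h9).resolve_right hX0)
        have hD : d^2 = (2*α-1)^2*a^2 + b^2 := by
          apply mul_left_cancel₀ hd2
          linear_combination C1
        linear_combination hda - hD
    · by_cases hX0 : (2*α-1 : ℝ) = 0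
      · have hα : α = 1/2 := by linarith
        subst hα
        have hs2 : s = 1/2 := by
          have h9 : (0:ℝ) = 1 - 2*s := by linear_combination G1
          linarith
        subst hs2
        have hdb : d^2 = b^2 := by
          have h9 : (d^2 - b^2) * (2*β-1) = 0 := by linear_combination P2
          exact sub_eq_zero.mp ((mul_eq_zero.mp h9).resolve_right hY0)
        have hD2 : d^2 = a^2 + (2*β-1)^2*b^2 := by
          apply mul_left_cancel₀ hd2
          linear_combination C2
        linear_combination hD2 - hdb
      · have h1 : (d^2 - ((2*α-1)^2*a^2 + b^2))*(2*β-1) = 0 := by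
          linear_combination P2 - (2*α-1)*a^2*G1
        have hD1 : d^2 = (2*α-1)^2*a^2 + b^2 :=
          sub_eq_zero.mp ((mul_eq_zero.mp h1).resolve_right hY0)
        have h2 : (d^2 - (a^2 + (2*β-1)^2*b^2))*(2*α-1) = 0 := by
          linear_combination P4 - (2*β-1)*b^2*G1
        have hD2 : d^2 = a^2 + (2*β-1)^2*b^2 :=
          sub_eq_zero.mp ((mul_eq_zero.mp h2).resolve_right hX0)
        linear_combination hD2 - hD1
  -- bounds on α and β
  have hσ2 : (2*s-1)^2 < 1 := by
    have h1 : 0 < s*(1-s) := mul_pos hs0 (by linarith)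
    have h2 : (2*s-1)^2 = 1 - 4*(s*(1-s)) := by ring
    linarith
  have hX2 : (2*α-1)^2 < 1 := by
    by_contra hcon
    push_neg at hcon
    have hY1 : 1 ≤ (2*β-1)^2 := by
      by_contra hc2
      push_neg at hc2
      have h1 : 0 ≤ ((2*α-1)^2 - 1)*a^2 := mul_nonneg (by linarith) (sq_nonneg a)
      have h2 : ((2*β-1)^2 - 1)*b^2 < 0 := mul_neg_of_neg_of_pos (by linarith) (pow_pos hb0 2)
      have h3 : ((2*α-1)^2 - 1)*a^2 = ((2*β-1)^2 - 1)*b^2 := by linear_combination GA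
      linarith
    have hm : (1:ℝ)*1 ≤ (2*α-1)^2*(2*β-1)^2 :=
      mul_le_mul hcon hY1 zero_le_one (by linarith [sq_nonneg (2*α-1)])
    have h3 : ((2*α-1)*(2*β-1))^2 = (2*α-1)^2*(2*β-1)^2 := by ring
    rw [G1] at h3
    have h4 : (1-2*s)^2 = (2*s-1)^2 := by ring
    linarith
  have hY2 : (2*β-1)^2 < 1 := by
    by_contra hcon
    push_neg at hcon
    have hX1 : 1 ≤ (2*α-1)^2 := by
      by_contra hc2
      push_neg at hc2
      have h1 : 0 ≤ ((2*β-1)^2 - 1)*b^2 := mul_nonneg (by linarith) (sq_nonneg b)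
      have h2 : ((2*α-1)^2 - 1)*a^2 < 0 := mul_neg_of_neg_of_pos (by linarith) (pow_pos ha0 2)
      have h3 : ((2*α-1)^2 - 1)*a^2 = ((2*β-1)^2 - 1)*b^2 := by linear_combination GA
      linarith
    have hm : (1:ℝ)*1 ≤ (2*α-1)^2*(2*β-1)^2 :=
      mul_le_mul hX1 hcon zero_le_one (by linarith [sq_nonneg (2*α-1)])
    have h3 : ((2*α-1)*(2*β-1))^2 = (2*α-1)^2*(2*β-1)^2 := by ring
    rw [G1] at h3
    have h4 : (1-2*s)^2 = (2*s-1)^2 := by ring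
    linarith
  have hα0 : 0 < α := by
    have h1 : 4*(α*α) - 4*α < 0 := by
      have h2 : (2*α-1)^2 = 4*(α*α) - 4*α + 1 := by ring
      linarith
    have h2 : 0 ≤ α*α := mul_self_nonneg α
    linarith
  have hα1 : α < 1 := by
    have h1 : 4*(α*α) - 4*α < 0 := by
      have h2 : (2*α-1)^2 = 4*(α*α) - 4*α + 1 := by ring
      linarith
    by_contra hcon
    push_neg at hcon
    have h3 : 1*α ≤ α*α := mul_le_mul_of_nonneg_right hcon (by linarith)
    linarith
  have hβ0 : 0 < β := by
    have h1 : 4*(β*β) - 4*β < 0 := by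
      have h2 : (2*β-1)^2 = 4*(β*β) - 4*β + 1 := by ring
      linarith
    have h2 : 0 ≤ β*β := mul_self_nonneg β
    linarith
  have hβ1 : β < 1 := by
    have h1 : 4*(β*β) - 4*β < 0 := by
      have h2 : (2*β-1)^2 = 4*(β*β) - 4*β + 1 := by ring
      linarith
    by_contra hcon
    push_neg at hcon
    have h3 : 1*β ≤ β*β := mul_le_mul_of_nonneg_right hcon (by linarith)
    linarith
  -- value of e
  have he' : e = s * a := by
    have h1 : A - E = -(s•u) := by rw [hEe]; abel
    rw [he, dist_eq_norm, h1, norm_neg, norm_smul, Real.norm_eq_abs, abs_of_pos hs0, ← haU]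
  -- value of x
  have hxv : x = α * a := by
    rw [hx]
    apply le_antisymm
    · have hfootmem : A + β•v ∈ (affineSpan ℝ ({A, D} : Set Pt) : Set Pt) := by
        have h1 := AffineMap.lineMap_mem_affineSpan_pair (k := ℝ) β A D
        have h2 : (AffineMap.lineMap A D β : Pt) = A + β•v := by
          rw [AffineMap.lineMap_apply]
          rw [vsub_eq_sub, ← hvdef, vadd_eq_add]
          abel
        rw [h2] at h1
        exact h1
      refine le_trans (Metric.infDist_le_dist_of_mem hfootmem) (le_of_eq ?_)
      have h3 : F₁ - (A + β•v) = α•u := by rw [hF1]; abel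
      rw [dist_eq_norm, h3, norm_smul, Real.norm_eq_abs, abs_of_pos hα0, ← haU]
    · rw [Metric.infDist_eq_iInf]
      haveI : Nonempty ↥(affineSpan ℝ ({A, D} : Set Pt) : Set Pt) :=
        ⟨⟨A, left_mem_affineSpan_pair ℝ A D⟩⟩
      apply le_ciInf
      intro W
      obtain ⟨W, hW⟩ := W
      have hW' : (W -ᵥ A) +ᵥ A ∈ affineSpan ℝ ({A, D} : Set Pt) := by
        rw [vsub_vadd]; exact hW
      obtain ⟨r, hr⟩ := (vadd_left_mem_affineSpan_pair (k := ℝ)).mp hW'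
      have hWe : W = A + r•v := by
        rw [vsub_eq_sub, vsub_eq_sub, ← hvdef] at hr
        have h5 : W - A = r•v := hr.symm
        rw [sub_eq_iff_eq_add] at h5
        rw [h5]; abel
      have hdist2 : (dist F₁ W)^2 = α^2*a^2 + (β-r)^2*b^2 := by
        rw [dist_eq_norm]
        have h1 : F₁ - W = α•u + (β-r)•v := by rw [hF1, hWe]; module
        rw [h1, hnorm]
      have h6 : (α*a)^2 ≤ (dist F₁ W)^2 := by
        rw [hdist2]
        have h7 : (α*a)^2 = α^2*a^2 := by ring
        linarith [mul_nonneg (sq_nonneg (β-r)) (sq_nonneg b)]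
      exact aux_sqle _ _ (mul_nonneg hα0.le ha0.le) dist_nonneg h6
  -- value of y
  have hyv : y = β * b := by
    rw [hy]
    apply le_antisymm
    · have hfootmem : A + α•u ∈ (affineSpan ℝ ({A, B} : Set Pt) : Set Pt) := by
        have h1 := AffineMap.lineMap_mem_affineSpan_pair (k := ℝ) α A B
        have h2 : (AffineMap.lineMap A B α : Pt) = A + α•u := by
          rw [AffineMap.lineMap_apply]
          rw [vsub_eq_sub, ← hudef, vadd_eq_add]
          abel
        rw [h2] at h1
        exact h1
      refine le_trans (Metric.infDist_le_dist_of_mem hfootmem) (le_of_eq ?_)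
      have h3 : F₁ - (A + α•u) = β•v := by rw [hF1]; abel
      rw [dist_eq_norm, h3, norm_smul, Real.norm_eq_abs, abs_of_pos hβ0, ← hbV]
    · rw [Metric.infDist_eq_iInf]
      haveI : Nonempty ↥(affineSpan ℝ ({A, B} : Set Pt) : Set Pt) :=
        ⟨⟨A, left_mem_affineSpan_pair ℝ A B⟩⟩
      apply le_ciInf
      intro W
      obtain ⟨W, hW⟩ := W
      have hW' : (W -ᵥ A) +ᵥ A ∈ affineSpan ℝ ({A, B} : Set Pt) := by
        rw [vsub_vadd]; exact hW
      obtain ⟨r, hr⟩ := (vadd_left_mem_affineSpan_pair (k := ℝ)).mp hW'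
      have hWe : W = A + r•u := by
        rw [vsub_eq_sub, vsub_eq_sub, ← hudef] at hr
        have h5 : W - A = r•u := hr.symm
        rw [sub_eq_iff_eq_add] at h5
        rw [h5]; abel
      have hdist2 : (dist F₁ W)^2 = (α-r)^2*a^2 + β^2*b^2 := by
        rw [dist_eq_norm]
        have h1 : F₁ - W = (α-r)•u + β•v := by rw [hF1, hWe]; module
        rw [h1, hnorm]
      have h6 : (β*b)^2 ≤ (dist F₁ W)^2 := by
        rw [hdist2]
        have h7 : (β*b)^2 = β^2*b^2 := by ring
        linarith [mul_nonneg (sq_nonneg (α-r)) (sq_nonneg a)]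
      exact aux_sqle _ _ (mul_nonneg hβ0.le hb0.le) dist_nonneg h6
  constructor
  · rw [hxv, hyv]
    linear_combination GA
  · rw [hxv, hyv, he']
    linear_combination a*b*G1
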